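/- arXiv:2111.08904 — 2 statements merged into one kernel-verified Lean document; each statement's English description precedes it below -/
import Mathlib

section
/- Let H ≥ 2, T ≥ 1 and (H^T − 1/H)/(H^T − 1) < ϑ ≤ (H^T + 1/H)/(H^T − 1). Then every orbit of the controlled map F is bounded: for each x_0 ∈ ℝ there exists M > 0 such that |F^k(x_0)| ≤ M for all k ≥ 0. -/
/-- The generalized tent map. -/
noncomputable def tent (H : ℝ) (x : ℝ) : ℝ := if x ≤ 1 / 2 then H * x else H * (1 - x)

/-- The controlled (predictive control) map `F(x) = f(ϑ x + (1-ϑ) f^T(x))`. -/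
noncomputable def ctrl (H : ℝ) (T : ℕ) (ϑ : ℝ) (x : ℝ) : ℝ :=
  tent H (ϑ * x + (1 - ϑ) * (tent H)^[T] x)

lemma tent_le_half (H : ℝ) (hH : 0 ≤ H) (y : ℝ) : tent H y ≤ H / 2 := by
  unfold tent
  split_ifs with h
  · nlinarith
  · nlinarith

lemma abs_tent_le (H : ℝ) (hH : 0 ≤ H) (y : ℝ) : |tent H y| ≤ H * |y| := by
  unfold tent
  split_ifs with h
  · rw [abs_mul, abs_of_nonneg hH]
  · rw [abs_mul, abs_of_nonneg hH]
    have h1 : |1 - y| ≤ |y| := by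
      rw [abs_of_pos (by linarith : (0:ℝ) < y), abs_le]
      constructor <;> linarith
    exact mul_le_mul_of_nonneg_left h1 hH

lemma tent_iter_nonpos (H : ℝ) (hH : 0 ≤ H) (x : ℝ) (hx : x ≤ 0) (k : ℕ) :
    (tent H)^[k] x = H ^ k * x := by
  induction k with
  | zero => simp
  | succ n ih =>
    rw [Function.iterate_succ_apply', ih, tent]
    have hns : H ^ n * x ≤ 0 := mul_nonpos_of_nonneg_of_nonpos (pow_nonneg hH n) hx
    rw [if_pos (by linarith : H ^ n * x ≤ 1 / 2)]
    ring

lemma abs_tent_iter_le (H : ℝ) (hH : 0 ≤ H) (x : ℝ) (k : ℕ) :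
    |(tent H)^[k] x| ≤ H ^ k * |x| := by
  induction k with
  | zero => simp
  | succ n ih =>
    rw [Function.iterate_succ_apply']
    calc |tent H ((tent H)^[n] x)| ≤ H * |(tent H)^[n] x| := abs_tent_le H hH _
      _ ≤ H * (H ^ n * |x|) := by
          exact mul_le_mul_of_nonneg_left ih hH
      _ = H ^ (n + 1) * |x| := by ring

theorem ctrl_all_orbits_bounded (H : ℝ) (hH : 2 ≤ H) (T : ℕ) (hT : 1 ≤ T)
    (ϑ : ℝ) (hϑ1 : (H ^ T - 1 / H) / (H ^ T - 1) < ϑ) (hϑ2 : ϑ ≤ (H ^ T + 1 / H) / (H ^ T - 1))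
    (x₀ : ℝ) :
    ∃ M : ℝ, 0 < M ∧ ∀ k : ℕ, |(ctrl H T ϑ)^[k] x₀| ≤ M := by
  have hH0 : (0:ℝ) < H := by linarith
  have hH0' : (0:ℝ) ≤ H := by linarith
  have hHT : (2:ℝ) ≤ H ^ T := le_trans hH (le_self_pow₀ (by linarith) (by omega))
  have hden : (0:ℝ) < H ^ T - 1 := by linarith
  rw [div_lt_iff₀ hden] at hϑ1
  rw [le_div_iff₀ hden] at hϑ2
  have h1H : 1 / H ≤ 1 := by rw [div_le_one hH0]; linarith
  have hϑ' : 1 ≤ ϑ := by nlinarith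
  have hHinv : H * (1 / H) = 1 := by field_simp
  -- the contraction coefficient on the nonpositive half-line
  have hc1 : H * (ϑ + (1 - ϑ) * H ^ T) ≤ 1 := by nlinarith
  have hc2 : -1 ≤ H * (ϑ + (1 - ϑ) * H ^ T) := by nlinarith
  -- key contraction on (-∞, 0]
  have key : ∀ y : ℝ, y ≤ 0 → |ctrl H T ϑ y| ≤ |y| := by
    intro y hy
    have harg : ϑ * y + (1 - ϑ) * (tent H)^[T] y = (ϑ + (1 - ϑ) * H ^ T) * y := by
      rw [tent_iter_nonpos H hH0' y hy T]; ring
    rw [ctrl, harg]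
    calc |tent H ((ϑ + (1 - ϑ) * H ^ T) * y)| ≤ H * |(ϑ + (1 - ϑ) * H ^ T) * y| :=
          abs_tent_le H hH0' _
      _ = |H * (ϑ + (1 - ϑ) * H ^ T)| * |y| := by
          rw [abs_mul, abs_mul, abs_of_nonneg hH0']; ring
      _ ≤ 1 * |y| := by
          exact mul_le_mul_of_nonneg_right (abs_le.mpr ⟨hc2, hc1⟩) (abs_nonneg y)
      _ = |y| := one_mul _
  -- global linear bound
  set L : ℝ := H * (ϑ + (ϑ - 1) * H ^ T) with hLdef
  have hL0 : 0 < L := by nlinarith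
  have global : ∀ y : ℝ, |ctrl H T ϑ y| ≤ L * |y| := by
    intro y
    rw [ctrl]
    have harg : |ϑ * y + (1 - ϑ) * (tent H)^[T] y| ≤ ϑ * |y| + (ϑ - 1) * (H ^ T * |y|) := by
      calc |ϑ * y + (1 - ϑ) * (tent H)^[T] y|
          ≤ |ϑ * y| + |(1 - ϑ) * (tent H)^[T] y| := abs_add_le _ _
        _ = ϑ * |y| + (ϑ - 1) * |(tent H)^[T] y| := by
            rw [abs_mul, abs_mul, abs_of_nonneg (by linarith : (0:ℝ) ≤ ϑ),
              abs_of_nonpos (by linarith : 1 - ϑ ≤ 0)]; ring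
        _ ≤ ϑ * |y| + (ϑ - 1) * (H ^ T * |y|) := by
            have := abs_tent_iter_le H hH0' y T
            have h2 := mul_le_mul_of_nonneg_left this (by linarith : (0:ℝ) ≤ ϑ - 1)
            linarith
    calc |tent H (ϑ * y + (1 - ϑ) * (tent H)^[T] y)|
        ≤ H * |ϑ * y + (1 - ϑ) * (tent H)^[T] y| := abs_tent_le H hH0' _
      _ ≤ H * (ϑ * |y| + (ϑ - 1) * (H ^ T * |y|)) := mul_le_mul_of_nonneg_left harg hH0'
      _ = L * |y| := by rw [hLdef]; ring
  -- ctrl is bounded above by H/2 everywhere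
  have upper : ∀ y : ℝ, ctrl H T ϑ y ≤ H / 2 := fun y => tent_le_half H hH0' _
  set M : ℝ := max (max (|ctrl H T ϑ x₀|) (L * (H / 2))) |x₀| with hMdef
  have hLM : L * (H / 2) ≤ M := le_trans (le_max_right _ _) (le_max_left _ _)
  have hM0 : 0 < M := lt_of_lt_of_le (by positivity) hLM
  refine ⟨M, hM0, ?_⟩
  have aux : ∀ k : ℕ, |(ctrl H T ϑ)^[k + 1] x₀| ≤ M ∧ (ctrl H T ϑ)^[k + 1] x₀ ≤ H / 2 := by
    intro k
    induction k with
    | zero =>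
      rw [Function.iterate_one]
      exact ⟨le_trans (le_max_left _ _) (le_max_left _ _), upper x₀⟩
    | succ n ih =>
      obtain ⟨ih1, ih2⟩ := ih
      rw [show n + 1 + 1 = (n + 1) + 1 from rfl, Function.iterate_succ_apply']
      set y := (ctrl H T ϑ)^[n + 1] x₀
      refine ⟨?_, upper y⟩
      rcases le_or_gt y 0 with hy | hy
      · exact le_trans (key y hy) ih1
      · calc |ctrl H T ϑ y| ≤ L * |y| := global y
          _ ≤ L * (H / 2) := by
              exact mul_le_mul_of_nonneg_left
                (by rw [abs_of_pos hy]; exact ih2) hL0.le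
          _ ≤ M := hLM
  intro k
  cases k with
  | zero =>
    simp only [Function.iterate_zero, id_eq]
    exact le_max_right _ _
  | succ n => exact (aux n).1
end

section
/- Let H ≥ 2, T ≥ 1, let τ be a positive divisor of T and set p = T/τ. Suppose the control parameter satisfies (H^T − 1/H)/(H^T + 1) < ϑ < (H^T + 1/H)/(H^T + 1). Let (η̂_1, …, η̂_τ) be a τ-cycle of the generalized tent map f with η̂_j ≠ 1/2 for all j and multiplier μ_τ = (f^τ)'(η̂_1). If μ_τ < 0 and p is odd, then |μ_τ·(ϑ + (1 − ϑ)·μ_τ^p)^τ| < 1 and (η̂_1, …, η̂_τ) is a locally asymptotically stable τ-cycle of the controlled map F (with prediction horizon T). -/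
open Filter

/-- `η 0, …, η (T-1)` is a `T`-cycle of `g`: the values are pairwise distinct,
`η (j+1) = g (η j)`, and the cycle closes up (`η T = η 0`, hence `η` is `T`-periodic). -/
def IsCycle (g : ℝ → ℝ) (T : ℕ) (η : ℕ → ℝ) : Prop :=
  (∀ i < T, ∀ j < T, η i = η j → i = j) ∧ (∀ j, η (j + 1) = g (η j)) ∧ η T = η 0

/-- A `T`-cycle `η` of `g` is locally asymptotically stable: every point of the cycle has an
open neighborhood all of whose points converge to it under iteration of `g^[T]`. -/
def CycleLAS (g : ℝ → ℝ) (T : ℕ) (η : ℕ → ℝ) : Prop :=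
  ∀ j < T, ∃ U : Set ℝ, IsOpen U ∧ η j ∈ U ∧
    ∀ x ∈ U, Filter.Tendsto (fun n => (g^[T])^[n] x) Filter.atTop (nhds (η j))

/-- slope of the tent map -/
noncomputable def tslope (H x : ℝ) : ℝ := if x ≤ 1 / 2 then H else -H

lemma tent_hasDerivAt (H : ℝ) {x : ℝ} (hx : x ≠ 1 / 2) :
    HasDerivAt (tent H) (tslope H x) x := by
  rcases lt_or_gt_of_ne hx with h | h
  · have he : tent H =ᶠ[nhds x] fun y => H * y := by
      filter_upwards [Iio_mem_nhds h] with y hy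
      rw [tent, if_pos (le_of_lt (Set.mem_Iio.mp hy))]
    rw [tslope, if_pos h.le]
    simpa using ((hasDerivAt_id x).const_mul H).congr_of_eventuallyEq he
  · have he : tent H =ᶠ[nhds x] fun y => H * (1 - y) := by
      filter_upwards [Ioi_mem_nhds h] with y hy
      rw [tent, if_neg (not_le.mpr (Set.mem_Ioi.mp hy))]
    rw [tslope, if_neg (not_le.mpr h)]
    have := ((hasDerivAt_id x).const_sub 1).const_mul H
    norm_num at this
    exact this.congr_of_eventuallyEq he

lemma las_of_deriv {g : ℝ → ℝ} {a m : ℝ} (hg : HasDerivAt g m a) (hfix : g a = a)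
    (hm : |m| < 1) : ∃ U : Set ℝ, IsOpen U ∧ a ∈ U ∧
      ∀ x ∈ U, Filter.Tendsto (fun n => g^[n] x) Filter.atTop (nhds a) := by
  have hm0 : 0 ≤ |m| := abs_nonneg m
  set c : ℝ := (|m| + 1) / 2 with hc
  have hc1 : c < 1 := by rw [hc]; linarith
  have hc0 : 0 ≤ c := by rw [hc]; linarith
  have hε : (0:ℝ) < (1 - |m|) / 2 := by linarith
  have h := (hasDerivAt_iff_isLittleO.mp hg).def hε
  have key : ∀ᶠ x in nhds a, |g x - a| ≤ c * |x - a| := by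
    filter_upwards [h] with x hx
    have hx' : |g x - a - (x - a) * m| ≤ (1 - |m|) / 2 * |x - a| := by
      simpa [Real.norm_eq_abs, hfix, smul_eq_mul] using hx
    have h1 : |g x - a| ≤ |g x - a - (x - a) * m| + |x - a| * |m| := by
      calc |g x - a| = |(g x - a - (x - a) * m) + (x - a) * m| := by ring_nf
        _ ≤ |g x - a - (x - a) * m| + |(x - a) * m| := abs_add_le _ _
        _ = |g x - a - (x - a) * m| + |x - a| * |m| := by rw [abs_mul]
    have heq : (1 - |m|) / 2 * |x - a| + |x - a| * |m| = c * |x - a| := by rw [hc]; ring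
    linarith
  obtain ⟨δ, hδ, hball⟩ := Metric.eventually_nhds_iff.mp key
  refine ⟨Metric.ball a δ, Metric.isOpen_ball, Metric.mem_ball_self hδ, fun x hx => ?_⟩
  have hxδ : |x - a| < δ := by simpa [Real.dist_eq] using hx
  have main : ∀ n, |g^[n] x - a| ≤ c ^ n * |x - a| := by
    intro n
    induction n with
    | zero => simp
    | succ n ih =>
      have hin : |g^[n] x - a| < δ := by
        have : c ^ n * |x - a| ≤ 1 * |x - a| :=
          mul_le_mul_of_nonneg_right (pow_le_one₀ hc0 hc1.le) (abs_nonneg _)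
        calc |g^[n] x - a| ≤ c ^ n * |x - a| := ih
          _ ≤ 1 * |x - a| := this
          _ < δ := by simpa using hxδ
      have := hball (y := g^[n] x) (by simpa [Real.dist_eq] using hin)
      rw [Function.iterate_succ_apply']
      calc |g (g^[n] x) - a| ≤ c * |g^[n] x - a| := this
        _ ≤ c * (c ^ n * |x - a|) := mul_le_mul_of_nonneg_left ih hc0
        _ = c ^ (n + 1) * |x - a| := by ring
  rw [tendsto_iff_dist_tendsto_zero]
  have hb : Filter.Tendsto (fun n => c ^ n * |x - a|) Filter.atTop (nhds 0) := by
    simpa using (tendsto_pow_atTop_nhds_zero_of_lt_one hc0 hc1).mul_const |x - a|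
  exact squeeze_zero (fun n => dist_nonneg) (fun n => by simpa [Real.dist_eq] using main n) hb

lemma cycle_periodic {g : ℝ → ℝ} {τ : ℕ} {η : ℕ → ℝ} (h : IsCycle g τ η) :
    ∀ j, η (j + τ) = η j := by
  intro j
  induction j with
  | zero => simpa using h.2.2
  | succ n ih =>
    have e : n + 1 + τ = (n + τ) + 1 := by omega
    rw [e, h.2.1, ih, ← h.2.1]

theorem subcycle_LAS_negative_theta_range (H : ℝ) (hH : 2 ≤ H) (T τ : ℕ) (hT : 1 ≤ T)
    (hτ : 1 ≤ τ) (hdvd : τ ∣ T) (p : ℕ) (hp : p = T / τ) (ϑ : ℝ)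
    (hϑ1 : (H ^ T - 1 / H) / (H ^ T + 1) < ϑ) (hϑ2 : ϑ < (H ^ T + 1 / H) / (H ^ T + 1))
    (η : ℕ → ℝ) (hcyc : IsCycle (tent H) τ η) (hhalf : ∀ j < τ, η j ≠ 1 / 2)
    (μτ : ℝ) (hμτ : μτ = deriv ((tent H)^[τ]) (η 0))
    (hcase : μτ < 0 ∧ Odd p) :
    |μτ * (ϑ + (1 - ϑ) * μτ ^ p) ^ τ| < 1 ∧ CycleLAS (ctrl H T ϑ) τ η := by
  obtain ⟨hμneg, hodd⟩ := hcase
  have hH0 : (0:ℝ) < H := by linarith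
  have hτ0 : 0 < τ := hτ
  have hTeq : T = τ * p := by rw [hp, Nat.mul_div_cancel' hdvd]
  have hper : ∀ j, η (j + τ) = η j := cycle_periodic hcyc
  have hpermul : ∀ k j, η (j + τ * k) = η j := by
    intro k
    induction k with
    | zero => simp
    | succ k ih =>
      intro j
      have e : j + τ * (k + 1) = (j + τ * k) + τ := by ring
      rw [e, hper, ih]
  have hne : ∀ j, η j ≠ 1 / 2 := by
    intro j
    have e : η j = η (j % τ) := by
      conv_lhs => rw [← Nat.mod_add_div j τ]
      exact hpermul _ _
    rw [e]
    exact hhalf _ (Nat.mod_lt j hτ0)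
  have hstep : ∀ j, η (j + 1) = tent H (η j) := hcyc.2.1
  have hit : ∀ k j, (tent H)^[k] (η j) = η (j + k) := by
    intro k
    induction k with
    | zero => simp
    | succ k ih =>
      intro j
      rw [Function.iterate_succ_apply', ih, ← hstep, Nat.add_assoc]
  set a : ℕ → ℝ := fun i => tslope H (η i) with ha
  have aabs : ∀ i, |a i| = H := by
    intro i
    rw [ha]
    simp only [tslope]
    split
    · exact abs_of_pos hH0
    · rw [abs_neg]; exact abs_of_pos hH0
  have ane : ∀ i, a i ≠ 0 := by
    intro i h
    have := aabs i
    rw [h, abs_zero] at this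
    linarith
  have hDt : ∀ k j, HasDerivAt ((tent H)^[k]) (∏ i ∈ Finset.range k, a (j + i)) (η j) := by
    intro k
    induction k with
    | zero => intro j; simpa using hasDerivAt_id (η j)
    | succ k ih =>
      intro j
      rw [Function.iterate_succ']
      have houter : HasDerivAt (tent H) (a (j + k)) ((tent H)^[k] (η j)) := by
        rw [hit k j]; exact tent_hasDerivAt H (hne _)
      have hcomp := houter.comp (η j) (ih j)
      rw [Finset.prod_range_succ, mul_comm]
      exact hcomp
  set P : ℕ → ℝ := fun j => ∏ i ∈ Finset.range τ, a (j + i) with hP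
  have hPshift : ∀ j, P (j + 1) = P j := by
    intro j
    have h1 : ∏ i ∈ Finset.range (τ + 1), a (j + i) = P j * a (j + τ) :=
      Finset.prod_range_succ _ _
    have h2 : ∏ i ∈ Finset.range (τ + 1), a (j + i) = P (j + 1) * a j := by
      rw [Finset.prod_range_succ' (fun i => a (j + i)) τ]
      have e1 : ∏ i ∈ Finset.range τ, a (j + (i + 1)) = P (j + 1) := by
        apply Finset.prod_congr rfl
        intro i _
        congr 1
        omega
      simp only [Nat.add_zero]
      rw [e1]
    have haper : a (j + τ) = a j := by rw [ha]; simp only; rw [hper j]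
    rw [haper] at h1
    exact mul_right_cancel₀ (ane j) (h1.symm.trans h2).symm
  have hPconst : ∀ j, P j = P 0 := by
    intro j
    induction j with
    | zero => rfl
    | succ j ih => rw [hPshift, ih]
  have hμ : μτ = P 0 := by rw [hμτ, (hDt τ 0).deriv]
  have habs : |μτ| = H ^ τ := by
    rw [hμ, hP]
    simp only
    rw [Finset.abs_prod]
    rw [Finset.prod_congr rfl (fun i _ => aabs (0 + i))]
    rw [Finset.prod_const, Finset.card_range]
  have hμval : μτ = -H ^ τ := by
    have := abs_of_neg hμneg
    linarith [habs.symm.trans this]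
  have hq : ∀ q j, ∏ i ∈ Finset.range (τ * q), a (j + i) = P 0 ^ q := by
    intro q
    induction q with
    | zero => simp
    | succ q ih =>
      intro j
      rw [show τ * (q + 1) = τ * q + τ from by ring, Finset.prod_range_add, ih j]
      have e2 : ∏ i ∈ Finset.range τ, a (j + (τ * q + i)) = P 0 := by
        rw [← hPconst (j + τ * q)]
        apply Finset.prod_congr rfl
        intro i _
        congr 1
        omega
      rw [e2]
      ring
  have hDT : ∀ j, HasDerivAt ((tent H)^[T]) (μτ ^ p) (η j) := by
    intro j
    have h2 : ∏ i ∈ Finset.range T, a (j + i) = μτ ^ p := by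
      rw [hμ, hTeq]
      exact hq p j
    exact h2 ▸ hDt T j
  have htentT : ∀ j, (tent H)^[T] (η j) = η j := by
    intro j
    rw [hit, hTeq, hpermul]
  -- numeric part
  have hμp : μτ ^ p = -H ^ T := by
    rw [hμval, hodd.neg_pow, ← pow_mul, ← hTeq]
  set A : ℝ := ϑ + (1 - ϑ) * μτ ^ p with hA
  have hHT1 : (0:ℝ) < H ^ T + 1 := by positivity
  have hb1 : H ^ T - 1 / H < ϑ * (H ^ T + 1) := (div_lt_iff₀ hHT1).mp hϑ1
  have hb2 : ϑ * (H ^ T + 1) < H ^ T + 1 / H := (lt_div_iff₀ hHT1).mp hϑ2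
  have hAeq : A = ϑ * (H ^ T + 1) - H ^ T := by rw [hA, hμp]; ring
  have hAabs : |A| < 1 / H := by
    rw [abs_lt]
    constructor <;> [linarith [hAeq]; linarith [hAeq]]
  have hHA : H * |A| < 1 := by
    have := mul_lt_mul_of_pos_left hAabs hH0
    rwa [mul_one_div_cancel (ne_of_gt hH0)] at this
  have hineq : |μτ * A ^ τ| < 1 := by
    calc |μτ * A ^ τ| = |μτ| * |A| ^ τ := by rw [abs_mul, abs_pow]
      _ = (H * |A|) ^ τ := by rw [habs, mul_pow]
      _ < 1 := pow_lt_one₀ (by positivity) hHA (by omega)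
  refine ⟨hineq, ?_⟩
  -- LAS part
  have hctrlval : ∀ j, ctrl H T ϑ (η j) = η (j + 1) := by
    intro j
    rw [ctrl, htentT]
    have e : ϑ * η j + (1 - ϑ) * η j = η j := by ring
    rw [e, ← hstep]
  have hu : ∀ j, HasDerivAt (fun x => ϑ * x + (1 - ϑ) * (tent H)^[T] x) A (η j) := by
    intro j
    have := ((hasDerivAt_id (η j)).const_mul ϑ).add ((hDT j).const_mul (1 - ϑ))
    have h2 : HasDerivAt (fun x => ϑ * x + (1 - ϑ) * (tent H)^[T] x)
        (ϑ * 1 + (1 - ϑ) * μτ ^ p) (η j) := this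
    rw [mul_one] at h2
    exact h2
  have hctrlD : ∀ j, HasDerivAt (ctrl H T ϑ) (a j * A) (η j) := by
    intro j
    have hval : ϑ * η j + (1 - ϑ) * (tent H)^[T] (η j) = η j := by
      rw [htentT]; ring
    have houter : HasDerivAt (tent H) (a j)
        ((fun x => ϑ * x + (1 - ϑ) * (tent H)^[T] x) (η j)) := by
      simp only [hval]
      exact tent_hasDerivAt H (hne j)
    have := houter.comp (η j) (hu j)
    exact this
  have hctrlit : ∀ k j, (ctrl H T ϑ)^[k] (η j) = η (j + k) := by
    intro k
    induction k with
    | zero => simp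
    | succ k ih =>
      intro j
      rw [Function.iterate_succ_apply', ih, hctrlval, Nat.add_assoc]
  have hctrlDit : ∀ k j,
      HasDerivAt ((ctrl H T ϑ)^[k]) (∏ i ∈ Finset.range k, (a (j + i) * A)) (η j) := by
    intro k
    induction k with
    | zero => intro j; simpa using hasDerivAt_id (η j)
    | succ k ih =>
      intro j
      rw [Function.iterate_succ']
      have houter : HasDerivAt (ctrl H T ϑ) (a (j + k) * A) ((ctrl H T ϑ)^[k] (η j)) := by
        rw [hctrlit k j]; exact hctrlD _
      have hcomp := houter.comp (η j) (ih j)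
      rw [Finset.prod_range_succ, mul_comm]
      exact hcomp
  intro j hj
  have hslope : ∏ i ∈ Finset.range τ, (a (j + i) * A) = μτ * A ^ τ := by
    rw [Finset.prod_mul_distrib, Finset.prod_const, Finset.card_range]
    have : ∏ i ∈ Finset.range τ, a (j + i) = P j := rfl
    rw [this, hPconst, ← hμ]
  have hderiv : HasDerivAt ((ctrl H T ϑ)^[τ]) (μτ * A ^ τ) (η j) :=
    hslope ▸ hctrlDit τ j
  have hfix : (ctrl H T ϑ)^[τ] (η j) = η j := by rw [hctrlit, hper]
  exact las_of_deriv hderiv hfix hineq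
end
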